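/- Let A be a complete abelian category and G : FinSet* → A a polynomial functor of degree ≤ n for some n (i.e., Prim(G)(I) = 0 whenever |I| > n). Then the natural map from the limit of G ∘ ι over the category of nonempty finite sets with surjections to G({*}) is an isomorphism, where ι(I) = {*} ⊔ I. -/

import Mathlib

open CategoryTheory Limits

universe v u

/-- Skeleton of the category `FinSet*` of pointed finite sets: the object `⟨m⟩`
represents `{*} ⊔ Fin m`, and morphisms are pointed maps, encoded as partially
defined maps (`none` = basepoint). -/
structure PtdFin : Type where
  n : ℕ

instance : Category.{0} PtdFin where
  Hom X Y := Fin X.n → Option (Fin Y.n)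
  id X := some
  comp f g := fun i => (f i).bind g
  id_comp f := rfl
  comp_id f := by
    funext i; show (f i).bind some = f i; cases f i <;> rfl
  assoc f g h := by
    funext i
    show ((f i).bind g).bind h = (f i).bind fun j => (g j).bind h
    cases f i <;> rfl

/-- Skeleton of the category `FinSetSurj_ne` of nonempty finite sets with surjections:
the object `⟨m⟩` represents `Fin (m+1)`. -/
structure SurjFin : Type where
  n : ℕ

instance : Category.{0} SurjFin where
  Hom X Y := {f : Fin (X.n + 1) → Fin (Y.n + 1) // Function.Surjective f}
  id X := ⟨id, Function.surjective_id⟩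
  comp f g := ⟨g.1 ∘ f.1, g.2.comp f.2⟩

/-- The functor `ι : FinSetSurj_ne → FinSet*`, `I ↦ {*} ⊔ I`. -/
def iotaSurj : SurjFin ⥤ PtdFin where
  obj X := ⟨X.n + 1⟩
  map f := fun i => some (f.1 i)
  map_id X := rfl
  map_comp f g := rfl

/-- The pointed map `ψ_{I∖{i},I} : {*} ⊔ I → {*} ⊔ (I∖{i})`, identity away from `i`
and collapsing `i` to the basepoint. -/
def psiDel {m : ℕ} (i : Fin (m + 1)) : (⟨m + 1⟩ : PtdFin) ⟶ ⟨m⟩ :=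
  ⇑(finSuccEquiv' i)

/-- `G : FinSet* → A` is polynomial of degree `≤ n`:
`∩_{i ∈ I} ker G(ψ_{I∖{i},I}) = 0` for every finite set `I` with `|I| > n`. -/
noncomputable def IsPolyDegLE {A : Type u} [Category.{v} A] [Abelian A]
    (n : ℕ) (G : PtdFin ⥤ A) : Prop :=
  ∀ m : ℕ, n < m + 1 →
    (Finset.univ.inf fun i : Fin (m + 1) =>
      kernelSubobject (G.map (psiDel i))) = ⊥

/-!
Write `x_I` for the legs of a cone over `G ∘ ι` and `z_I = x_I - x_I ≫ G(0)` for their reduced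
parts, where `0` is the pointed map collapsing everything. Compatibility with surjections shows
that `z_I ≫ G(g)`, for a pointed map `g` hitting the basepoint, depends only on the image `S` of
`g`. The degree condition says that the alternating sum `∑_T (-1)^|T| G(e_T)` of the
restrictions to subsets `T ⊆ I` vanishes once `|I| > n`; applied to a large `I` surjecting onto
`S`, it becomes an alternating sum over the subsets of `S`, and induction on `S` makes all these
`z_I ≫ G(g)` vanish. The same relation, in which only the term `T = I` survives, then gives
`z_I = 0`: every leg factors through `G({*})`, which is therefore the limit.
-/

section AlternatingSums

variable {α β M : Type*} [DecidableEq α] [DecidableEq β] [AddCommGroup M]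

lemma neg_one_pow_zsmul_eq_zero_iff (k : ℕ) {x : M} : (-1 : ℤ) ^ k • x = 0 ↔ x = 0 := by
  rcases neg_one_pow_eq_or ℤ k with h | h <;> simp [h]

lemma sum_powerset_insert_neg_one_pow_zsmul {s : Finset α} {i : α} (hi : i ∉ s)
    (f : Finset α → M) :
    ∑ t ∈ (insert i s).powerset, (-1 : ℤ) ^ t.card • f t
      = ∑ t ∈ s.powerset, (-1 : ℤ) ^ t.card • f t
        - ∑ t ∈ s.powerset, (-1 : ℤ) ^ t.card • f (insert i t) := by
  rw [Finset.sum_powerset_insert hi, sub_eq_add_neg, ← Finset.sum_neg_distrib]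
  congr 1
  refine Finset.sum_congr rfl fun t ht => ?_
  rw [Finset.card_insert_of_notMem fun h => hi (Finset.mem_powerset.mp ht h), pow_succ,
    mul_neg_one, neg_smul]

lemma sum_powerset_neg_one_pow_zsmul_eq_zero {s : Finset α} {i : α} (hi : i ∈ s)
    {f : Finset α → M} (hf : ∀ t, f (insert i t) = f t) :
    ∑ t ∈ s.powerset, (-1 : ℤ) ^ t.card • f t = 0 := by
  rw [← Finset.insert_erase hi,
    sum_powerset_insert_neg_one_pow_zsmul (Finset.notMem_erase i s), sub_eq_zero]
  simp only [hf]

lemma sum_powerset_neg_one_pow_zsmul_image (f : α → β) (g : Finset β → M) (s : Finset α) :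
    ∑ t ∈ s.powerset, (-1 : ℤ) ^ t.card • g (t.image f)
      = ∑ u ∈ (s.image f).powerset, (-1 : ℤ) ^ u.card • g u := by
  induction s using Finset.induction_on generalizing g with
  | empty => simp
  | @insert a s ha ih =>
    rw [sum_powerset_insert_neg_one_pow_zsmul ha]
    simp only [Finset.image_insert]
    rw [ih, ih (fun u => g (insert (f a) u))]
    by_cases hfa : f a ∈ s.image f
    · rw [Finset.insert_eq_self.mpr hfa, sub_eq_self]
      exact sum_powerset_neg_one_pow_zsmul_eq_zero hfa fun t => by rw [Finset.insert_idem]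
    · rw [sum_powerset_insert_neg_one_pow_zsmul hfa]

end AlternatingSums

lemma Fin.exists_surjective {a b : ℕ} (hb : 0 < b) (h : b ≤ a) :
    ∃ p : Fin a → Fin b, Function.Surjective p :=
  haveI : Nonempty (Fin b) := ⟨⟨0, hb⟩⟩
  ⟨Function.invFun (Fin.castLE h), Function.invFun_surjective (Fin.castLE_injective h)⟩

lemma Finset.exists_image_univ_eq {a m : ℕ} {s : Finset (Fin m)} (hs : s.Nonempty)
    (h : s.card ≤ a) : ∃ p : Fin a → Fin m, Finset.univ.image p = s := by
  obtain ⟨q, hq⟩ := Fin.exists_surjective hs.card_pos h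
  refine ⟨s.orderEmbOfFin rfl ∘ q, ?_⟩
  rw [← Finset.image_image, Finset.image_univ_of_surjective hq, Finset.image_orderEmbOfFin_univ]

namespace PtdFin

lemma comp_apply {X Y Z : PtdFin} (f : X ⟶ Y) (g : Y ⟶ Z) (i : Fin X.n) :
    (f ≫ g) i = (f i).bind g := rfl

lemma psiDel_apply {m : ℕ} (i j : Fin (m + 1)) : psiDel i j = finSuccEquiv' i j := rfl

def ofFun {a b : ℕ} (q : Fin a → Fin b) : (⟨a⟩ : PtdFin) ⟶ ⟨b⟩ := fun i => some (q i)

def collapse (a b : ℕ) : (⟨a⟩ : PtdFin) ⟶ ⟨b⟩ := fun _ => none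

def restrict {a : ℕ} (t : Finset (Fin a)) : (⟨a⟩ : PtdFin) ⟶ ⟨a⟩ :=
  fun i => if i ∈ t then some i else none

def range {a b : ℕ} (g : (⟨a⟩ : PtdFin) ⟶ ⟨b⟩) : Finset (Fin b) :=
  Finset.univ.filter fun s => some s ∈ Set.range g

-- The representative, among the pointed maps with image `s` that meet the basepoint, through
-- which all the others factor by a surjection: the extra last point goes to the basepoint.
def incl {m : ℕ} (s : Finset (Fin m)) : (⟨s.card + 1⟩ : PtdFin) ⟶ ⟨m⟩ :=
  psiDel (Fin.last _) ≫ ofFun (s.orderEmbOfFin rfl)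

lemma comp_ofFun_apply {X : PtdFin} {a b : ℕ} (f : X ⟶ ⟨a⟩) (q : Fin a → Fin b) (i : Fin X.n) :
    (f ≫ ofFun q) i = (f i).map q := by
  rw [comp_apply]
  cases f i <;> rfl

lemma collapse_comp {a b c : ℕ} (f : (⟨b⟩ : PtdFin) ⟶ ⟨c⟩) :
    collapse a b ≫ f = collapse a c := rfl

lemma ofFun_comp_collapse {a b c : ℕ} (q : Fin a → Fin b) :
    ofFun q ≫ collapse b c = collapse a c := rfl

lemma collapse_zero_zero : collapse 0 0 = 𝟙 (⟨0⟩ : PtdFin) := by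
  funext i
  exact i.elim0

lemma restrict_univ (a : ℕ) : restrict (Finset.univ : Finset (Fin a)) = 𝟙 _ := by
  funext i
  simp [restrict]
  rfl

lemma restrict_comp_ofFun_apply_of_notMem {a b : ℕ} {t : Finset (Fin a)} {j : Fin a}
    (hj : j ∉ t) (q : Fin a → Fin b) : (restrict t ≫ ofFun q) j = none := by
  simp [comp_ofFun_apply, restrict, hj]

lemma restrict_insert_comp_psiDel {m : ℕ} (t : Finset (Fin (m + 1))) (i : Fin (m + 1)) :
    restrict (insert i t) ≫ psiDel i = restrict t ≫ psiDel i := by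
  funext j
  rw [comp_apply, comp_apply]
  by_cases hj : j = i
  · subst hj
    by_cases hjt : j ∈ t <;> simp [restrict, hjt, psiDel_apply, finSuccEquiv'_at]
  · simp [restrict, hj]

lemma psiDel_comp_apply_self {m : ℕ} (i : Fin (m + 1)) {Y : PtdFin} (g : (⟨m⟩ : PtdFin) ⟶ Y) :
    (psiDel i ≫ g) i = none := by
  rw [comp_apply, psiDel_apply, finSuccEquiv'_at, Option.bind_none]

lemma incl_apply {m : ℕ} (s : Finset (Fin m)) (x : Fin (s.card + 1)) :
    incl s x = (finSuccEquiv' (Fin.last _) x).map (s.orderEmbOfFin rfl) :=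
  comp_ofFun_apply _ _ _

lemma incl_injective {m : ℕ} (s : Finset (Fin m)) :
    Function.Injective (incl s : Fin (s.card + 1) → Option (Fin m)) := by
  intro x y h
  rw [incl_apply, incl_apply] at h
  exact (finSuccEquiv' _).injective (Option.map_injective (s.orderEmbOfFin rfl).injective h)

lemma incl_empty (m : ℕ) : incl (∅ : Finset (Fin m)) = collapse _ m := by
  funext x
  rw [incl_apply]
  cases finSuccEquiv' (Fin.last _) x with
  | none => rfl
  | some w => exact absurd w.2 (by simp)

lemma mem_range_incl {m : ℕ} (s : Finset (Fin m)) (x : Option (Fin m)) :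
    x ∈ Set.range (incl s) ↔ ∀ y ∈ x, y ∈ s := by
  simp only [Set.mem_range, incl_apply, Option.mem_def]
  constructor
  · rintro ⟨z, rfl⟩ y hy
    obtain ⟨w, -, rfl⟩ := Option.map_eq_some_iff.mp hy
    exact s.orderEmbOfFin_mem rfl w
  · intro h
    cases x with
    | none => exact ⟨Fin.last _, by simp [finSuccEquiv'_at]⟩
    | some y =>
      obtain ⟨w, hw⟩ : y ∈ Set.range (s.orderEmbOfFin rfl) := by
        rw [Finset.range_orderEmbOfFin]; exact h y rfl
      exact ⟨w.castSucc, by simp [finSuccEquiv'_last_apply_castSucc, hw]⟩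

lemma mem_range {a b : ℕ} (g : (⟨a⟩ : PtdFin) ⟶ ⟨b⟩) (s : Fin b) :
    s ∈ range g ↔ some s ∈ Set.range g := by
  simp [range]

lemma psiDel_last_comp_apply_castSucc {k : ℕ} {Y : PtdFin} (g : (⟨k⟩ : PtdFin) ⟶ Y)
    (i : Fin k) : (psiDel (Fin.last k) ≫ g) i.castSucc = g i := by
  rw [comp_apply, psiDel_apply, finSuccEquiv'_last_apply_castSucc, Option.bind_some]

lemma range_psiDel_last_comp_restrict_comp_ofFun {k m : ℕ} (t : Finset (Fin k))
    (p : Fin k → Fin m) : range (psiDel (Fin.last k) ≫ restrict t ≫ ofFun p) = t.image p := by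
  ext s
  simp only [mem_range, Set.mem_range, Finset.mem_image]
  constructor
  · rintro ⟨j, hj⟩
    induction j using Fin.lastCases with
    | last => simp [psiDel_comp_apply_self] at hj
    | cast i =>
      rw [psiDel_last_comp_apply_castSucc, comp_ofFun_apply] at hj
      by_cases hi : i ∈ t
      · exact ⟨i, hi, by simpa [restrict, hi] using hj⟩
      · simp [restrict, hi] at hj
  · rintro ⟨i, hi, rfl⟩
    refine ⟨i.castSucc, ?_⟩
    rw [psiDel_last_comp_apply_castSucc, comp_ofFun_apply]
    simp [restrict, hi]

lemma exists_surjective_ofFun_comp_incl {a m : ℕ} (g : (⟨a⟩ : PtdFin) ⟶ ⟨m⟩) {j : Fin a}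
    (hj : g j = none) : ∃ q : Fin a → Fin ((range g).card + 1),
      Function.Surjective q ∧ ofFun q ≫ incl (range g) = g := by
  have hrange : Set.range g = Set.range (incl (range g)) := by
    ext x
    rw [mem_range_incl]
    cases x with
    | none => simpa using ⟨j, hj⟩
    | some y => simp [mem_range]
  obtain ⟨q, hq⟩ := Set.range_subset_range_iff_exists_comp.mp hrange.le
  refine ⟨q, fun y => ?_, hq.symm⟩
  obtain ⟨i, hi⟩ := hrange.ge (Set.mem_range_self y)
  exact ⟨i, incl_injective _ (hi ▸ congrFun hq i).symm⟩

section Cone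

variable {A : Type u} [Category.{v} A] {G : PtdFin ⥤ A} (c : Cone (iotaSurj ⋙ G))

def leg (a : ℕ) : c.pt ⟶ G.obj ⟨a + 1⟩ := c.π.app ⟨a⟩

lemma leg_comp_map_ofFun {a b : ℕ} {q : Fin (a + 1) → Fin (b + 1)}
    (hq : Function.Surjective q) : leg c a ≫ G.map (ofFun q) = leg c b :=
  c.w (show (⟨a⟩ : SurjFin) ⟶ ⟨b⟩ from ⟨q, hq⟩)

variable [Preadditive A]

def reducedLeg (a : ℕ) : c.pt ⟶ G.obj ⟨a + 1⟩ :=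
  leg c a ≫ (𝟙 _ - G.map (collapse (a + 1) (a + 1)))

lemma reducedLeg_comp_map_ofFun {a b : ℕ} {q : Fin (a + 1) → Fin (b + 1)}
    (hq : Function.Surjective q) : reducedLeg c a ≫ G.map (ofFun q) = reducedLeg c b := by
  have hcomm : (𝟙 _ - G.map (collapse (a + 1) (a + 1))) ≫ G.map (ofFun q)
      = G.map (ofFun q) ≫ (𝟙 _ - G.map (collapse (b + 1) (b + 1))) := by
    rw [Preadditive.sub_comp, Preadditive.comp_sub, Category.id_comp, Category.comp_id,
      ← G.map_comp, ← G.map_comp, collapse_comp, ofFun_comp_collapse]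
  rw [reducedLeg, reducedLeg, Category.assoc, hcomm, ← Category.assoc, leg_comp_map_ofFun c hq]

lemma reducedLeg_comp_map_collapse (a b : ℕ) :
    reducedLeg c a ≫ G.map (collapse (a + 1) b) = 0 := by
  rw [reducedLeg, Category.assoc, Preadditive.sub_comp, Category.id_comp, ← G.map_comp,
    collapse_comp, sub_self, comp_zero]

lemma reducedLeg_comp_map_eq_of_apply_eq_none {a m : ℕ} (g : (⟨a + 1⟩ : PtdFin) ⟶ ⟨m⟩)
    {j : Fin (a + 1)} (hj : g j = none) :
    reducedLeg c a ≫ G.map g = reducedLeg c (range g).card ≫ G.map (incl (range g)) := by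
  obtain ⟨q, hq, hg⟩ := exists_surjective_ofFun_comp_incl g hj
  conv_lhs => rw [← hg, G.map_comp, ← Category.assoc, reducedLeg_comp_map_ofFun c hq]

end Cone

def zeroCone : Cone iotaSurj where
  pt := ⟨0⟩
  π := { app := fun X => collapse 0 (X.n + 1) }

end PtdFin

namespace IsPolyDegLE

open PtdFin

variable {A : Type u} [Category.{v} A] [Abelian A] {n : ℕ} {G : PtdFin ⥤ A}

lemma eq_zero_of_comp_map_psiDel_eq_zero (hG : IsPolyDegLE n G) {m : ℕ} (hm : n < m + 1)
    {X : A} {f : X ⟶ G.obj ⟨m + 1⟩} (hf : ∀ i, f ≫ G.map (psiDel i) = 0) : f = 0 := by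
  have hfac := (Subobject.finset_inf_factors _).mpr
    fun i (_ : i ∈ Finset.univ) => kernelSubobject_factors _ _ (hf i)
  rw [hG m hm] at hfac
  exact (Subobject.bot_factors_iff_zero _).mp hfac

lemma sum_map_restrict_eq_zero (hG : IsPolyDegLE n G) {m : ℕ} (hm : n < m + 1) :
    ∑ t ∈ (Finset.univ : Finset (Fin (m + 1))).powerset,
      (-1 : ℤ) ^ t.card • G.map (restrict t) = 0 :=
  hG.eq_zero_of_comp_map_psiDel_eq_zero hm fun i => by
    simp only [Preadditive.sum_comp, Preadditive.zsmul_comp, ← G.map_comp]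
    exact sum_powerset_neg_one_pow_zsmul_eq_zero (Finset.mem_univ i)
      fun t => by rw [restrict_insert_comp_psiDel]

lemma sum_comp_map_restrict_eq_zero (hG : IsPolyDegLE n G) {m : ℕ} (hm : n < m + 1) {X : A}
    {P Q : PtdFin} (x : X ⟶ G.obj P) (f : P ⟶ ⟨m + 1⟩) (g : (⟨m + 1⟩ : PtdFin) ⟶ Q) :
    ∑ t ∈ (Finset.univ : Finset (Fin (m + 1))).powerset,
      (-1 : ℤ) ^ t.card • (x ≫ G.map (f ≫ restrict t ≫ g)) = 0 := by
  have h := congrArg (fun φ => x ≫ G.map f ≫ φ ≫ G.map g) (hG.sum_map_restrict_eq_zero hm)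
  simpa only [Preadditive.sum_comp, Preadditive.comp_sum, Preadditive.zsmul_comp,
    Preadditive.comp_zsmul, G.map_comp, zero_comp, comp_zero] using h

section Cone

variable (c : Cone (iotaSurj ⋙ G))

lemma reducedLeg_comp_map_incl_eq_zero (hG : IsPolyDegLE n G) {m : ℕ} (s : Finset (Fin m)) :
    reducedLeg c s.card ≫ G.map (incl s) = 0 := by
  induction s using Finset.strongInduction with
  | _ s ih =>
  rcases s.eq_empty_or_nonempty with rfl | hs
  · rw [incl_empty]
    exact reducedLeg_comp_map_collapse c _ _
  set k := max n m
  set F : Finset (Fin m) → (c.pt ⟶ G.obj ⟨m⟩) := fun u => reducedLeg c u.card ≫ G.map (incl u)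
  obtain ⟨p, hp⟩ := s.exists_image_univ_eq (a := k + 1) hs
    ((s.card_le_univ).trans (by simp [k]; omega))
  have hterm (t : Finset (Fin (k + 1))) :
      reducedLeg c (k + 1) ≫ G.map (psiDel (Fin.last _) ≫ restrict t ≫ ofFun p)
        = F (t.image p) := by
    rw [reducedLeg_comp_map_eq_of_apply_eq_none c _ (psiDel_comp_apply_self _ _),
      range_psiDel_last_comp_restrict_comp_ofFun]
  have hrel := hG.sum_comp_map_restrict_eq_zero (m := k) (by omega) (reducedLeg c (k + 1))
    (psiDel (Fin.last _)) (ofFun p)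
  simp only [hterm] at hrel
  rw [sum_powerset_neg_one_pow_zsmul_image, hp,
    Finset.sum_eq_single_of_mem s (Finset.mem_powerset_self s) fun u hu hne => by
      rw [show F u = 0 from
        ih u (Finset.ssubset_iff_subset_ne.mpr ⟨Finset.mem_powerset.mp hu, hne⟩), smul_zero]]
    at hrel
  exact (neg_one_pow_zsmul_eq_zero_iff _).mp hrel

lemma reducedLeg_comp_map_eq_zero_of_apply_eq_none (hG : IsPolyDegLE n G) {a m : ℕ}
    (g : (⟨a + 1⟩ : PtdFin) ⟶ ⟨m⟩) {j : Fin (a + 1)} (hj : g j = none) :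
    reducedLeg c a ≫ G.map g = 0 := by
  rw [reducedLeg_comp_map_eq_of_apply_eq_none c g hj, hG.reducedLeg_comp_map_incl_eq_zero]

lemma reducedLeg_eq_zero (hG : IsPolyDegLE n G) (a : ℕ) : reducedLeg c a = 0 := by
  set k := max n a
  obtain ⟨p, hp⟩ := Fin.exists_surjective (a := k + 1) (b := a + 1) (by omega) (by omega)
  have hrel := hG.sum_comp_map_restrict_eq_zero (m := k) (by omega) (reducedLeg c k) (𝟙 _)
    (ofFun p)
  rw [Finset.sum_eq_single_of_mem Finset.univ (Finset.mem_powerset_self _) fun t _ ht => ?_]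
    at hrel
  · rwa [Category.id_comp, restrict_univ, Category.id_comp, reducedLeg_comp_map_ofFun c hp,
      neg_one_pow_zsmul_eq_zero_iff] at hrel
  · obtain ⟨j, hj⟩ := Finset.exists_of_ssubset (Finset.ssubset_univ_iff.mpr ht)
    rw [Category.id_comp, hG.reducedLeg_comp_map_eq_zero_of_apply_eq_none c _
      (restrict_comp_ofFun_apply_of_notMem hj.2 p), smul_zero]

lemma leg_eq_leg_zero_comp (hG : IsPolyDegLE n G) (a : ℕ) :
    leg c a = leg c 0 ≫ G.map (collapse 1 0 ≫ collapse 0 (a + 1)) := by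
  have h := hG.reducedLeg_eq_zero c a
  rw [reducedLeg, Preadditive.comp_sub, Category.comp_id, sub_eq_zero] at h
  have hsurj : Function.Surjective fun _ : Fin (a + 1) => (0 : Fin 1) :=
    fun y => ⟨0, (Fin.fin_one_eq_zero y).symm⟩
  rw [← leg_comp_map_ofFun c hsurj, Category.assoc, ← G.map_comp]
  exact h

end Cone

def isLimitMapConeZeroCone (hG : IsPolyDegLE n G) : IsLimit (G.mapCone zeroCone) where
  lift s := leg s 0 ≫ G.map (collapse 1 0)
  fac s j := by
    show (leg s 0 ≫ G.map (collapse 1 0)) ≫ G.map (collapse 0 (j.n + 1)) = leg s j.n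
    rw [Category.assoc, ← G.map_comp]
    exact (hG.leg_eq_leg_zero_comp s j.n).symm
  uniq s m hm := by
    change s.pt ⟶ G.obj ⟨0⟩ at m
    change m = leg s 0 ≫ G.map (collapse 1 0)
    have h : m ≫ G.map (collapse 0 1) = leg s 0 := hm ⟨0⟩
    rw [← h, Category.assoc, ← G.map_comp, collapse_comp, collapse_zero_zero, G.map_id,
      Category.comp_id]

end IsPolyDegLE

/-- For a complete abelian category `A` and a polynomial functor `G : FinSet* → A` of
degree `≤ n`, the natural map `lim_{I ∈ FinSetSurj_ne} G({*} ⊔ I) → G({*})` (induced by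
the natural transformation to the constant functor at the terminal pointed set `{*}`)
is an isomorphism. -/
theorem limit_of_polynomial_functor_is_trivial
    {A : Type u} [Category.{v} A] [Abelian A] [HasLimits A]
    (n : ℕ) (G : PtdFin ⥤ A) (hG : IsPolyDegLE n G) :
    IsIso (limit.π (iotaSurj ⋙ G) ⟨0⟩ ≫
      G.map (show (⟨1⟩ : PtdFin) ⟶ ⟨0⟩ from fun _ => none)) :=
  (IsLimit.nonempty_isLimit_iff_isIso_lift hG.isLimitMapConeZeroCone).mp ⟨limit.isLimit _⟩
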